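/- Let Φ be an ortho-additive range-contractive map on a von Neumann algebra M. Then for every projection P ∈ M and every operator A ∈ M, Φ(PA) = P·Φ(A). -/

import Mathlib

/-!
Write `Q = 1 - P`. Range-contractivity gives `R(Φ X) ≤ R(X)`, so any operator fixing `X` from the
left also fixes `R(X)` and hence `Φ X`. Applied to `P A` and `Q A`, this gives `P Φ(P A) = Φ(P A)`
and `Q Φ(Q A) = Φ(Q A)`, so `P Φ(Q A) = 0`. Since `(P A)* (Q A) = A* P Q A = 0`, ortho-additivity
splits `Φ A = Φ(P A) + Φ(Q A)`, and multiplying by `P` gives `P Φ A = Φ(P A)`.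
-/

noncomputable section

namespace Stmt9

variable {H : Type*} [NormedAddCommGroup H] [InnerProductSpace ℂ H] [CompleteSpace H]

/-- The range projection of a bounded operator: the orthogonal projection of `H` onto the
closure of the range of `A` (equivalently, the smallest projection `P` with `P * A = A`). -/
noncomputable def rangeProjection (A : H →L[ℂ] H) : H →L[ℂ] H :=
  haveI : CompleteSpace ((LinearMap.range (A : H →ₗ[ℂ] H)).topologicalClosure : Submodule ℂ H) :=
    (Submodule.isClosed_topologicalClosure _).completeSpace_coe
  (LinearMap.range (A : H →ₗ[ℂ] H)).topologicalClosure.subtypeL ∘L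
    Submodule.orthogonalProjectionOnto (LinearMap.range (A : H →ₗ[ℂ] H)).topologicalClosure

/-- The order on projections: `P ≤ Q` iff `P * Q = P`. -/
def projLE (P Q : H →L[ℂ] H) : Prop := P * Q = P

/-- `Φ` is an ortho-additive map on `M`: it is additive on pairs of orthogonal elements. -/
def OrthoAdditive (M : VonNeumannAlgebra H) (Φ : (H →L[ℂ] H) → (H →L[ℂ] H)) : Prop :=
  ∀ A ∈ M, ∀ B ∈ M, star A * B = 0 → Φ (A + B) = Φ A + Φ B

/-- `Φ` is a range-contractive map on `M`: `R(Φ A) ≤ R(A)` for all `A ∈ M`. -/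
def RangeContractive (M : VonNeumannAlgebra H) (Φ : (H →L[ℂ] H) → (H →L[ℂ] H)) : Prop :=
  ∀ A ∈ M, projLE (rangeProjection (Φ A)) (rangeProjection A)

theorem rangeProjection_eq_starProjection (A : H →L[ℂ] H) :
    rangeProjection A = (LinearMap.range (A : H →ₗ[ℂ] H)).topologicalClosure.starProjection :=
  rfl

theorem rangeProjection_mul_self (A : H →L[ℂ] H) : rangeProjection A * A = A := by
  ext v
  rw [rangeProjection_eq_starProjection]
  exact Submodule.starProjection_eq_self_iff.mpr (Submodule.le_topologicalClosure _ ⟨v, rfl⟩)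

theorem star_rangeProjection (A : H →L[ℂ] H) : star (rangeProjection A) = rangeProjection A := by
  rw [rangeProjection_eq_starProjection]
  exact isSelfAdjoint_starProjection _

theorem mul_rangeProjection_of_mul_eq {Q A : H →L[ℂ] H} (h : Q * A = A) :
    Q * rangeProjection A = rangeProjection A := by
  have hrange : (LinearMap.range (A : H →ₗ[ℂ] H)).topologicalClosure ≤
      LinearMap.ker ((Q - 1 : H →L[ℂ] H) : H →ₗ[ℂ] H) :=
    Submodule.topologicalClosure_minimal _
      (LinearMap.range_le_ker_iff.mpr (by ext v; simpa [sub_eq_zero] using congr($h v)))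
      (ContinuousLinearMap.isClosed_ker _)
  ext v
  have hv := hrange (Submodule.starProjection_apply_mem _ v)
  simpa [sub_eq_zero, rangeProjection_eq_starProjection] using hv

theorem rangeProjection_mul_rangeProjection_of_projLE {A B : H →L[ℂ] H}
    (h : projLE (rangeProjection A) (rangeProjection B)) :
    rangeProjection B * rangeProjection A = rangeProjection A := by
  simpa only [star_mul, star_rangeProjection] using congr(star $h)

namespace RangeContractive

variable {M : VonNeumannAlgebra H} {Φ : (H →L[ℂ] H) → (H →L[ℂ] H)}

theorem rangeProjection_mul_apply (hrc : RangeContractive M Φ) {X : H →L[ℂ] H} (hX : X ∈ M) :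
    rangeProjection X * Φ X = Φ X := by
  conv_lhs => rw [← rangeProjection_mul_self (Φ X), ← mul_assoc,
    rangeProjection_mul_rangeProjection_of_projLE (hrc X hX)]
  exact rangeProjection_mul_self (Φ X)

theorem mul_apply_of_mul_eq (hrc : RangeContractive M Φ) {Q X : H →L[ℂ] H} (hX : X ∈ M)
    (hQX : Q * X = X) : Q * Φ X = Φ X := by
  rw [← hrc.rangeProjection_mul_apply hX, ← mul_assoc, mul_rangeProjection_of_mul_eq hQX]

end RangeContractive

theorem OrthoAdditive.apply_eq_add_one_sub {M : VonNeumannAlgebra H}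
    {Φ : (H →L[ℂ] H) → (H →L[ℂ] H)} (hadd : OrthoAdditive M Φ) {P A : H →L[ℂ] H}
    (hP : P ∈ M) (hPidem : IsIdempotentElem P) (hPs : star P = P) (hA : A ∈ M) :
    Φ A = Φ (P * A) + Φ ((1 - P) * A) := by
  have horth : star (P * A) * ((1 - P) * A) = 0 := by
    rw [star_mul, hPs, mul_assoc, ← mul_assoc P, hPidem.mul_one_sub_self, zero_mul, mul_zero]
  rw [← hadd _ (mul_mem hP hA) _ (mul_mem (sub_mem (one_mem M) hP) hA) horth, ← add_mul,
    add_sub_cancel, one_mul]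

theorem stmt9 (M : VonNeumannAlgebra H)
    (Φ : (H →L[ℂ] H) → (H →L[ℂ] H))
    (hadd : OrthoAdditive M Φ)
    (hrc : RangeContractive M Φ) :
    ∀ P : H →L[ℂ] H, P ∈ M → P * P = P → star P = P →
      ∀ A ∈ M, Φ (P * A) = P * Φ A := by
  intro P hP hP2 hPs A hA
  have hPidem : IsIdempotentElem P := hP2
  have hfixP : P * Φ (P * A) = Φ (P * A) :=
    hrc.mul_apply_of_mul_eq (mul_mem hP hA) (by rw [← mul_assoc, hPidem.eq])
  have hfixQ : (1 - P) * Φ ((1 - P) * A) = Φ ((1 - P) * A) :=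
    hrc.mul_apply_of_mul_eq (mul_mem (sub_mem (one_mem M) hP) hA)
      (by rw [← mul_assoc, hPidem.one_sub.eq])
  have hkillQ : P * Φ ((1 - P) * A) = 0 := by
    rw [← hfixQ, ← mul_assoc, hPidem.mul_one_sub_self, zero_mul]
  rw [hadd.apply_eq_add_one_sub hP hPidem hPs hA, mul_add, hfixP, hkillQ, add_zero]

end Stmt9
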